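/- arXiv:2205.09412 — 3 statements merged into one kernel-verified Lean document; each statement's English description precedes it below -/
import Mathlib

section
/- Let ḡ be lower semicontinuous, symmetric (ḡ(v)=ḡ(-v)), locally integrable and nonnegative, and let μ be a minimizer of the energy E among probability measures on ℝ^N with E(μ) < ∞ and compact support. Then the potential ψ_μ(x) = ∫ ḡ(y-x) dμ(y) satisfies ψ_μ(x) = E(μ) for μ-almost every x in the support of μ, and ψ_μ(x) ≥ E(μ) for Lebesgue-almost every x in ℝ^N. -/
open MeasureTheory
open scoped ENNReal

noncomputable def energy {N : ℕ} (g : EuclideanSpace ℝ (Fin N) → ℝ≥0∞)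
    (μ : Measure (EuclideanSpace ℝ (Fin N))) : ℝ≥0∞ :=
  ∫⁻ x, ∫⁻ y, g (y - x) ∂μ ∂μ

/-- The potential associated to a measure `μ`: `ψ_μ(x) = ∫ ḡ(y-x) dμ(y)`. -/
noncomputable def potential {N : ℕ} (g : EuclideanSpace ℝ (Fin N) → ℝ≥0∞)
    (μ : Measure (EuclideanSpace ℝ (Fin N))) (x : EuclideanSpace ℝ (Fin N)) : ℝ≥0∞ :=
  ∫⁻ y, g (y - x) ∂μ

/-- The support of a measure. -/
def msupp {N : ℕ} (μ : Measure (EuclideanSpace ℝ (Fin N))) :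
    Set (EuclideanSpace ℝ (Fin N)) :=
  {x | ∀ U : Set (EuclideanSpace ℝ (Fin N)), IsOpen U → x ∈ U → μ U ≠ 0}

/-! Minimality is tested against `(1 - t) • μ + t • ν` for probability measures `ν` of finite
energy. By symmetry of `ḡ` that energy is `(1 - t)² E(μ) + 2 t (1 - t) ∫ ψ_μ dν + t² E(ν)`, so
letting `t → 0⁺` gives `E(μ) ≤ ∫ ψ_μ dν`. For `ν` the normalised restriction of `μ`, or of Lebesgue
measure to a bounded set (whose energy is finite because `ḡ` is locally integrable), this shows
that `{ψ_μ < E(μ)}` is null. Since `∫ ψ_μ dμ = E(μ)`, the bound `ψ_μ ≥ E(μ)` is an equality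
`μ`-a.e. -/

open Set Filter Topology Metric
open scoped ProbabilityTheory

theorem le_of_forall_le_quadratic_interpolation {a b c : ℝ}
    (h : ∀ t ∈ Ioo (0 : ℝ) 1, a ≤ (1 - t) ^ 2 * a + 2 * (1 - t) * t * b + t ^ 2 * c) :
    a ≤ b := by
  have hdiv : ∀ t ∈ Ioo (0 : ℝ) 1, (2 - t) * a ≤ 2 * (1 - t) * b + t * c := by
    intro t ht
    have := h t ht
    exact le_of_mul_le_mul_left (by linarith) ht.1
  have hlim : ∀ f : ℝ → ℝ, Continuous f → Tendsto f (𝓝[>] 0) (𝓝 (f 0)) := fun f hf =>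
    hf.continuousWithinAt.tendsto
  have := le_of_tendsto_of_tendsto (hlim (fun t => (2 - t) * a) (by fun_prop))
    (hlim (fun t => 2 * (1 - t) * b + t * c) (by fun_prop))
    (eventually_of_mem (Ioo_mem_nhdsGT one_pos) hdiv)
  norm_num at this
  linarith

theorem setLIntegral_comp_sub_right_le {G : Type*} [MeasurableSpace G] [AddGroup G]
    [MeasurableAdd G] (μ : Measure G) [μ.IsAddRightInvariant] {f : G → ℝ≥0∞}
    (hf : Measurable f) {s D : Set G} (hD : MeasurableSet D) (x : G)
    (hsD : ∀ y ∈ s, y - x ∈ D) :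
    ∫⁻ y in s, f (y - x) ∂μ ≤ ∫⁻ z in D, f z ∂μ :=
  calc ∫⁻ y in s, f (y - x) ∂μ ≤ ∫⁻ y in (· - x) ⁻¹' D, f (y - x) ∂μ := lintegral_mono_set hsD
    _ = ∫⁻ z in D, f z ∂μ := (measurePreserving_sub_right μ x).setLIntegral_comp_preimage hD hf

section Potential

variable {N : ℕ} {g : EuclideanSpace ℝ (Fin N) → ℝ≥0∞}

theorem measurable_potential (hg : Measurable g) (μ : Measure (EuclideanSpace ℝ (Fin N)))
    [SFinite μ] : Measurable (potential g μ) :=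
  Measurable.lintegral_prod_right (f := fun x y => g (y - x))
    (hg.comp (measurable_snd.sub measurable_fst))

theorem potential_add_measure (μ ν : Measure (EuclideanSpace ℝ (Fin N))) :
    potential g (μ + ν) = potential g μ + potential g ν := by
  ext x; exact lintegral_add_measure _ _ _

theorem potential_smul_measure (c : ℝ≥0∞) (μ : Measure (EuclideanSpace ℝ (Fin N))) :
    potential g (c • μ) = c • potential g μ := by
  ext x; exact lintegral_smul_measure _ _

theorem energy_eq_lintegral_potential (μ : Measure (EuclideanSpace ℝ (Fin N))) :
    energy g μ = ∫⁻ x, potential g μ x ∂μ := rfl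

theorem energy_mono {μ ν : Measure (EuclideanSpace ℝ (Fin N))} (h : μ ≤ ν) :
    energy g μ ≤ energy g ν :=
  lintegral_mono' h fun _ => lintegral_mono' h le_rfl

theorem energy_smul {c : ℝ≥0∞} (hc : c ≠ ⊤) (μ : Measure (EuclideanSpace ℝ (Fin N))) :
    energy g (c • μ) = c ^ 2 * energy g μ := by
  simp only [energy_eq_lintegral_potential, potential_smul_measure, lintegral_smul_measure,
    Pi.smul_apply, smul_eq_mul, lintegral_const_mul' c _ hc]
  ring

theorem lintegral_potential_comm (hg : Measurable g) (hsym : ∀ v, g (-v) = g v)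
    (μ ν : Measure (EuclideanSpace ℝ (Fin N))) [SFinite μ] [SFinite ν] :
    ∫⁻ x, potential g μ x ∂ν = ∫⁻ x, potential g ν x ∂μ := by
  calc ∫⁻ x, potential g μ x ∂ν = ∫⁻ y, ∫⁻ x, g (y - x) ∂ν ∂μ :=
        lintegral_lintegral_swap (hg.comp (measurable_snd.sub measurable_fst)).aemeasurable
    _ = ∫⁻ x, potential g ν x ∂μ := by
        refine lintegral_congr fun y => lintegral_congr fun x => ?_
        rw [← hsym, neg_sub]

theorem energy_smul_add_smul (hg : Measurable g) (hsym : ∀ v, g (-v) = g v)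
    (μ ν : Measure (EuclideanSpace ℝ (Fin N))) [SFinite μ] [SFinite ν] (s t : ℝ≥0∞) :
    energy g (s • μ + t • ν) =
      s ^ 2 * energy g μ + 2 * s * t * ∫⁻ x, potential g μ x ∂ν + t ^ 2 * energy g ν := by
  have hμ := measurable_potential hg μ
  have hν := measurable_potential hg ν
  have hcross := lintegral_potential_comm hg hsym μ ν
  simp only [energy_eq_lintegral_potential, potential_add_measure, potential_smul_measure,
    lintegral_add_measure, lintegral_smul_measure, Pi.add_apply, Pi.smul_apply, smul_eq_mul,
    lintegral_add_left (hμ.const_mul s), lintegral_const_mul _ hμ, lintegral_const_mul _ hν,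
    hcross]
  ring

theorem energy_volume_restrict_lt_top (hg : Measurable g)
    (hloc : ∀ K, IsCompact K → ∫⁻ x in K, g x < ⊤) {A : Set (EuclideanSpace ℝ (Fin N))}
    (hA : MeasurableSet A) (hAb : Bornology.IsBounded A) :
    energy g (volume.restrict A) < ⊤ :=
  calc energy g (volume.restrict A) = ∫⁻ x in A, ∫⁻ y in A, g (y - x) := rfl
    _ ≤ ∫⁻ x in A, ∫⁻ z in closedBall 0 (diam A), g z :=
        setLIntegral_mono' hA fun x hx =>
          setLIntegral_comp_sub_right_le volume hg measurableSet_closedBall x fun y hy => by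
            simpa [dist_eq_norm] using dist_le_diam_of_mem hAb hy hx
    _ = (∫⁻ z in closedBall 0 (diam A), g z) * volume A := setLIntegral_const _ _
    _ < ⊤ := ENNReal.mul_lt_top (hloc _ (isCompact_closedBall _ _)) hAb.measure_lt_top

section Minimizer

variable (hg : Measurable g) (hsym : ∀ v, g (-v) = g v)
  {μ : Measure (EuclideanSpace ℝ (Fin N))} [IsProbabilityMeasure μ]
  (hmin : ∀ ν, IsProbabilityMeasure ν → energy g μ ≤ energy g ν) (hμ : energy g μ ≠ ⊤)
include hg hsym hmin hμ

theorem energy_le_lintegral_potential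
    (ν : Measure (EuclideanSpace ℝ (Fin N))) [IsProbabilityMeasure ν] (hν : energy g ν ≠ ⊤) :
    energy g μ ≤ ∫⁻ x, potential g μ x ∂ν := by
  obtain hb | hb := eq_or_ne (∫⁻ x, potential g μ x ∂ν) ⊤
  · exact hb ▸ le_top
  refine (ENNReal.toReal_le_toReal hμ hb).1 (le_of_forall_le_quadratic_interpolation
    (c := (energy g ν).toReal) fun t ht => ?_)
  have hprob : IsProbabilityMeasure (ENNReal.ofReal (1 - t) • μ + ENNReal.ofReal t • ν) := by
    constructor
    simp [← ENNReal.ofReal_add (sub_nonneg.2 ht.2.le) ht.1.le]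
  have h := ENNReal.toReal_mono (by finiteness) ((hmin _ hprob).trans_eq
    (energy_smul_add_smul hg hsym μ ν _ _))
  rw [ENNReal.toReal_add (by finiteness) (by finiteness),
    ENNReal.toReal_add (by finiteness) (by finiteness)] at h
  simpa [ENNReal.toReal_mul, ht.1.le, ht.2.le] using h

theorem measure_eq_zero_of_potential_lt_energy {ρ : Measure (EuclideanSpace ℝ (Fin N))}
    {A : Set (EuclideanSpace ℝ (Fin N))} (hA : MeasurableSet A) (hρA : ρ A ≠ ⊤)
    (hρ : energy g (ρ.restrict A) ≠ ⊤) (hlt : ∀ x ∈ A, potential g μ x < energy g μ) :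
    ρ A = 0 := by
  by_contra h0
  have : IsProbabilityMeasure ρ[|A] := ProbabilityTheory.cond_isProbabilityMeasure_of_finite h0 hρA
  have hinv : (ρ A)⁻¹ ≠ ⊤ := ENNReal.inv_ne_top.2 h0
  have hfirst := energy_le_lintegral_potential hg hsym hmin hμ ρ[|A]
    (by rw [ProbabilityTheory.cond, energy_smul hinv]; finiteness)
  have hle : ∫⁻ x in A, potential g μ x ∂ρ ≤ ∫⁻ _ in A, energy g μ ∂ρ :=
    setLIntegral_mono' hA fun x hx => (hlt x hx).le
  have hlt' : ∫⁻ x in A, potential g μ x ∂ρ < ∫⁻ _ in A, energy g μ ∂ρ :=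
    setLIntegral_strict_mono hA h0 measurable_const
      (ne_top_of_le_ne_top (by rw [setLIntegral_const]; finiteness) hle) (ae_of_all _ hlt)
  rw [ProbabilityTheory.cond, lintegral_smul_measure, smul_eq_mul] at hfirst
  rw [setLIntegral_const] at hlt'
  refine (hfirst.trans_lt ?_).false
  calc (ρ A)⁻¹ * ∫⁻ x in A, potential g μ x ∂ρ < (ρ A)⁻¹ * (energy g μ * ρ A) :=
        ENNReal.mul_lt_mul_right (ENNReal.inv_ne_zero.2 hρA) hinv hlt'
    _ = energy g μ := by rw [mul_comm, mul_assoc, ENNReal.mul_inv_cancel h0 hρA, mul_one]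

theorem ae_energy_le_potential : ∀ᵐ x ∂μ, energy g μ ≤ potential g μ x := by
  simp only [ae_iff, not_le]
  exact measure_eq_zero_of_potential_lt_energy hg hsym hmin hμ
    (measurableSet_lt (measurable_potential hg μ) measurable_const) (measure_ne_top μ _)
    ((energy_mono Measure.restrict_le_self).trans_lt hμ.lt_top).ne fun _ hx => hx

theorem potential_ae_eq_const : potential g μ =ᵐ[μ] fun _ => energy g μ :=
  (ae_eq_of_ae_le_of_lintegral_le (ae_energy_le_potential hg hsym hmin hμ)
    (by simpa using hμ) (measurable_potential hg μ).aemeasurable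
    (by rw [lintegral_const, measure_univ, mul_one]; rfl)).symm

theorem ae_volume_energy_le_potential
    (hloc : ∀ K, IsCompact K → ∫⁻ x in K, g x < ⊤) :
    ∀ᵐ x, energy g μ ≤ potential g μ x := by
  have hS : MeasurableSet {x | potential g μ x < energy g μ} :=
    measurableSet_lt (measurable_potential hg μ) measurable_const
  suffices ∀ n : ℕ, volume ({x | potential g μ x < energy g μ} ∩ ball 0 n) = 0 by
    simpa [ae_iff, ← inter_iUnion, iUnion_ball_nat] using measure_iUnion_null this
  intro n
  have hb : Bornology.IsBounded ({x | potential g μ x < energy g μ} ∩ ball 0 n) :=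
    isBounded_ball.subset inter_subset_right
  exact measure_eq_zero_of_potential_lt_energy hg hsym hmin hμ (hS.inter measurableSet_ball)
    hb.measure_lt_top.ne (energy_volume_restrict_lt_top hg hloc (hS.inter measurableSet_ball) hb).ne
    fun _ hx => hx.1

end Minimizer

end Potential

theorem potential_ae_eq_energy_general {N : ℕ}
    (g : EuclideanSpace ℝ (Fin N) → ℝ≥0∞)
    (hlsc : LowerSemicontinuous g)
    (hsym : ∀ v : EuclideanSpace ℝ (Fin N), g (-v) = g v)
    (hloc : ∀ K : Set (EuclideanSpace ℝ (Fin N)), IsCompact K → ∫⁻ x in K, g x ∂volume < ⊤)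
    (μ : Measure (EuclideanSpace ℝ (Fin N))) (hμ : IsProbabilityMeasure μ)
    (hmin : ∀ ν : Measure (EuclideanSpace ℝ (Fin N)), IsProbabilityMeasure ν →
      energy g μ ≤ energy g ν)
    (hfin : energy g μ < ⊤) :
    (∀ᵐ x ∂μ, x ∈ msupp μ → potential g μ x = energy g μ) ∧
    (∀ᵐ x ∂(volume : Measure (EuclideanSpace ℝ (Fin N))),
      energy g μ ≤ potential g μ x) := by
  have hg := hlsc.measurable
  refine ⟨?_, ae_volume_energy_le_potential hg hsym hmin hfin.ne hloc⟩
  filter_upwards [potential_ae_eq_const hg hsym hmin hfin.ne] with x hx _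
  exact hx

/-- For a l.s.c., symmetric, locally integrable kernel `ḡ ≥ 0` and a minimizer `μ`
of the energy among probability measures, with finite energy and compact support,
the potential equals `E(μ)` for `μ`-a.e. point of the support, and is `≥ E(μ)`
Lebesgue-a.e. on `ℝ^N`. -/
theorem potential_ae_eq_energy {N : ℕ}
    (g : EuclideanSpace ℝ (Fin N) → ℝ≥0∞)
    (hlsc : LowerSemicontinuous g)
    (hsym : ∀ v : EuclideanSpace ℝ (Fin N), g (-v) = g v)
    (hloc : ∀ K : Set (EuclideanSpace ℝ (Fin N)), IsCompact K → ∫⁻ x in K, g x ∂volume < ⊤)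
    (μ : Measure (EuclideanSpace ℝ (Fin N))) (hμ : IsProbabilityMeasure μ)
    (hmin : ∀ ν : Measure (EuclideanSpace ℝ (Fin N)), IsProbabilityMeasure ν →
      energy g μ ≤ energy g ν)
    (hfin : energy g μ < ⊤)
    (hcpt : ∃ K : Set (EuclideanSpace ℝ (Fin N)), IsCompact K ∧ μ Kᶜ = 0) :
    (∀ᵐ x ∂μ, x ∈ msupp μ → potential g μ x = energy g μ) ∧
    (∀ᵐ x ∂(volume : Measure (EuclideanSpace ℝ (Fin N))),
      energy g μ ≤ potential g μ x) :=
  potential_ae_eq_energy_general g hlsc hsym hloc μ hμ hmin hfin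
end

section
/- Let g : (0,∞) → [0,∞) be decreasing on (0, 3ρ/ε) with g(t) t^α < 1/j for all 0 < t < 2ρ (where ρ is chosen so that g(3ρ/ε)(3ρ/ε)^α = 1/j). Then ∫∫_{B_ρ × B_ρ} g(|y-x|) dy dx < (3^α 2^{N-α} N ω_N² ρ^{2N} / (ε^α (N-α))) · g(3ρ/ε), where 0 < α < N and ω_N is the volume of the unit ball in ℝ^N. -/
/-!
For `x, y ∈ B_ρ`, `y ≠ x`, we have `0 < ‖y - x‖ < 2ρ`, hence `g ‖y - x‖ < c ‖y - x‖ ^ (-α)` with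
`c = 1 / j`. After translating by `x`, the inner integral is at most `c ∫_{B(0, ρ + ‖x‖)} ‖w‖ ^ (-α)`,
which in polar coordinates equals `c N ω_N (ρ + ‖x‖) ^ (N - α) / (N - α)` and is strictly smaller
than its value at radius `2ρ`. Integrating over `x ∈ B_ρ` contributes `ω_N ρ ^ N`, and
`c = g(3ρ/ε) (3ρ/ε) ^ α` turns the constant into the stated one.
-/

open MeasureTheory Metric Set
open scoped ENNReal

theorem setLIntegral_lt_mul_measure {α : Type*} [MeasurableSpace α] {μ : Measure α}
    {f : α → ℝ≥0∞} {s : Set α} {C : ℝ≥0∞} (hs : MeasurableSet s) (hμs : μ s ≠ 0)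
    (hμs' : μ s ≠ ∞) (hC : C ≠ ∞) (hf : ∀ x ∈ s, f x < C) :
    ∫⁻ x in s, f x ∂μ < C * μ s := by
  rw [← setLIntegral_const]
  refine setLIntegral_strict_mono hs hμs measurable_const ?_ (ae_of_all _ hf)
  refine ne_top_of_le_ne_top ?_ (setLIntegral_mono measurable_const fun x hx ↦ (hf x hx).le)
  rw [setLIntegral_const]
  exact ENNReal.mul_ne_top hC hμs'

section Translation

variable {E : Type*} [NormedAddCommGroup E] [MeasurableSpace E] [BorelSpace E]
  (μ : Measure E) [μ.IsAddRightInvariant]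

theorem setLIntegral_ball_comp_norm_sub_le (h : ℝ → ℝ≥0∞) (x : E) (r : ℝ) :
    ∫⁻ y in ball 0 r, h ‖y - x‖ ∂μ ≤ ∫⁻ w in ball 0 (r + ‖x‖), h ‖w‖ ∂μ := by
  have hpre : (· - x) ⁻¹' ball (0 : E) (r + ‖x‖) = ball x (r + ‖x‖) := by
    ext y
    simp [dist_eq_norm]
  calc ∫⁻ y in ball 0 r, h ‖y - x‖ ∂μ ≤ ∫⁻ y in ball x (r + ‖x‖), h ‖y - x‖ ∂μ := by
        refine lintegral_mono_set fun y hy ↦ ?_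
        rw [mem_ball_zero_iff] at hy
        rw [mem_ball, dist_eq_norm]
        linarith [norm_sub_le y x]
    _ = ∫⁻ w in ball 0 (r + ‖x‖), h ‖w‖ ∂μ := by
        rw [← hpre]
        exact (measurePreserving_sub_right μ x).setLIntegral_comp_preimage_emb
          (MeasurableEquiv.subRight x).measurableEmbedding (fun w ↦ h ‖w‖) _

theorem setLIntegral_ball_le_of_mul_rpow_lt [NullSingletonClass μ] {g : ℝ → ℝ} {α c ρ : ℝ}
    (hg : ∀ t ∈ Ioo 0 (2 * ρ), g t * t ^ α < c) {x : E} (hx : x ∈ ball (0 : E) ρ) :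
    ∫⁻ y in ball 0 ρ, ENNReal.ofReal (g ‖y - x‖) ∂μ ≤
      ENNReal.ofReal c * ∫⁻ w in ball 0 (ρ + ‖x‖), ENNReal.ofReal (‖w‖ ^ (-α)) ∂μ := by
  have hne : ∀ᵐ y ∂μ, y ≠ x := ae_iff.2 (by simp)
  calc ∫⁻ y in ball 0 ρ, ENNReal.ofReal (g ‖y - x‖) ∂μ
      ≤ ∫⁻ y in ball 0 ρ, ENNReal.ofReal c * ENNReal.ofReal (‖y - x‖ ^ (-α)) ∂μ := by
        refine setLIntegral_mono_ae' measurableSet_ball ?_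
        filter_upwards [hne] with y hyx hy
        have ht : 0 < ‖y - x‖ := norm_pos_iff.2 (sub_ne_zero.2 hyx)
        have ht' : ‖y - x‖ < 2 * ρ := by
          rw [mem_ball_zero_iff] at hx hy
          linarith [norm_sub_le y x]
        rw [← ENNReal.ofReal_mul' (Real.rpow_nonneg ht.le _), Real.rpow_neg ht.le,
          ← div_eq_mul_inv]
        exact ENNReal.ofReal_le_ofReal
          ((le_div_iff₀ (Real.rpow_pos_of_pos ht α)).2 (hg _ ⟨ht, ht'⟩).le)
    _ = ENNReal.ofReal c * ∫⁻ y in ball 0 ρ, ENNReal.ofReal (‖y - x‖ ^ (-α)) ∂μ :=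
        lintegral_const_mul' _ _ ENNReal.ofReal_ne_top
    _ ≤ _ := mul_le_mul_right
        (setLIntegral_ball_comp_norm_sub_le μ (fun t ↦ ENNReal.ofReal (t ^ (-α))) x ρ) _

end Translation

section Polar

variable {E : Type*} [NormedAddCommGroup E] [NormedSpace ℝ E] [FiniteDimensional ℝ E]
  [MeasurableSpace E] [BorelSpace E] [Nontrivial E] (μ : Measure E) [μ.IsAddHaarMeasure]

local notation "dim" => Module.finrank ℝ

theorem lintegral_fun_norm_addHaar {f : ℝ → ℝ≥0∞} (hf : Measurable f) :
    ∫⁻ x, f ‖x‖ ∂μ =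
      dim E * μ (ball 0 1) * ∫⁻ t in Ioi (0 : ℝ), ENNReal.ofReal (t ^ (dim E - 1)) * f t :=
  calc
    ∫⁻ x, f ‖x‖ ∂μ = ∫⁻ x : ({(0)}ᶜ : Set E), f ‖x.1‖ ∂(μ.comap (↑)) := by
      rw [lintegral_subtype_comap (measurableSet_singleton _).compl fun x ↦ f ‖x‖,
        restrict_compl_singleton]
    _ = ∫⁻ x, f x.2 ∂μ.toSphere.prod (.volumeIoiPow (dim E - 1)) := by
      simpa using μ.measurePreserving_homeomorphUnitSphereProd.lintegral_comp_emb
        (Homeomorph.measurableEmbedding _) (f ∘ Subtype.val ∘ Prod.snd)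
    _ = μ.toSphere univ * ∫⁻ t : Ioi (0 : ℝ), f t ∂.volumeIoiPow (dim E - 1) := by
      rw [lintegral_prod (fun z : sphere (0 : E) 1 × Ioi (0 : ℝ) ↦ f z.2)
        ((hf.comp measurable_subtype_coe).comp measurable_snd).aemeasurable]
      simp [lintegral_const, mul_comm]
    _ = _ := by
      rw [Measure.volumeIoiPow, lintegral_withDensity_eq_lintegral_mul _
          (measurable_subtype_coe.pow_const _).ennreal_ofReal
          (show Measurable fun t : Ioi (0 : ℝ) ↦ f t from hf.comp measurable_subtype_coe),
        μ.toSphere_apply_univ, ← lintegral_subtype_comap measurableSet_Ioi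
          fun t ↦ ENNReal.ofReal (t ^ (dim E - 1)) * f t]
      rfl

theorem lintegral_ball_norm_rpow_neg {α R : ℝ} (hα : α < dim E) (hR : 0 < R) :
    ∫⁻ x in ball (0 : E) R, ENNReal.ofReal (‖x‖ ^ (-α)) ∂μ =
      dim E * μ (ball 0 1) * ENNReal.ofReal (R ^ ((dim E : ℝ) - α) / ((dim E : ℝ) - α)) := by
  have hradial : ∀ t ∈ Ioo (0 : ℝ) R, t ^ (dim E - 1) * t ^ (-α) = t ^ ((dim E : ℝ) - 1 - α) := by
    rintro t ⟨ht, -⟩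
    rw [← Real.rpow_natCast, ← Real.rpow_add ht, Nat.cast_sub Module.finrank_pos, Nat.cast_one,
      sub_eq_add_neg _ α]
  have hint : IntegrableOn (fun t : ℝ ↦ t ^ ((dim E : ℝ) - 1 - α)) (Ioo 0 R) := by
    rw [intervalIntegral.integrableOn_Ioo_rpow_iff hR]
    linarith
  calc ∫⁻ x in ball (0 : E) R, ENNReal.ofReal (‖x‖ ^ (-α)) ∂μ
      = ∫⁻ x, (Iio R).indicator (fun t ↦ ENNReal.ofReal (t ^ (-α))) ‖x‖ ∂μ := by
        rw [← lintegral_indicator measurableSet_ball]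
        congr with x
        simp only [indicator, mem_ball_zero_iff, mem_Iio]
    _ = dim E * μ (ball 0 1) * ∫⁻ t in Ioo 0 R, ENNReal.ofReal (t ^ ((dim E : ℝ) - 1 - α)) := by
        rw [lintegral_fun_norm_addHaar μ ((by fun_prop : Measurable fun t : ℝ ↦
          ENNReal.ofReal (t ^ (-α))).indicator measurableSet_Iio)]
        simp_rw [← indicator_mul_right (Iio R) fun t : ℝ ↦ ENNReal.ofReal (t ^ (dim E - 1))]
        rw [setLIntegral_indicator measurableSet_Iio, inter_comm, Ioi_inter_Iio]
        refine congrArg _ (setLIntegral_congr_fun measurableSet_Ioo fun t ht ↦ ?_)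
        rw [← ENNReal.ofReal_mul (pow_nonneg ht.1.le _), hradial t ht]
    _ = _ := by
        rw [← ofReal_integral_eq_lintegral_ofReal hint, ← integral_Ioc_eq_integral_Ioo,
          ← intervalIntegral.integral_of_le hR.le, integral_rpow (by left; linarith),
          Real.zero_rpow (by linarith), sub_zero, sub_right_comm _ (1 : ℝ) α, sub_add_cancel]
        · filter_upwards [ae_restrict_mem measurableSet_Ioo] with t ht
          exact Real.rpow_nonneg ht.1.le _

theorem lintegral_ball_norm_rpow_neg_strictMonoOn {α : ℝ} (hα : α < dim E) :
    StrictMonoOn (fun R ↦ ∫⁻ x in ball (0 : E) R, ENNReal.ofReal (‖x‖ ^ (-α)) ∂μ) (Ioi 0) := by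
  intro r (hr : 0 < r) R (hR : 0 < R) hrR
  have hball : (dim E : ℝ≥0∞) * μ (ball 0 1) ≠ 0 :=
    mul_ne_zero (Nat.cast_ne_zero.2 Module.finrank_pos.ne') (measure_ball_pos μ _ one_pos).ne'
  simp only [lintegral_ball_norm_rpow_neg μ hα hr, lintegral_ball_norm_rpow_neg μ hα hR]
  refine ENNReal.mul_lt_mul_right hball (by finiteness) ?_
  rw [ENNReal.ofReal_lt_ofReal_iff (div_pos (Real.rpow_pos_of_pos hR _) (sub_pos.2 hα))]
  gcongr

theorem setLIntegral_ball_setLIntegral_ball_lt {g : ℝ → ℝ} {α c ρ : ℝ} (hα : α < dim E)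
    (hρ : 0 < ρ) (hc : 0 < c) (hg : ∀ t ∈ Ioo 0 (2 * ρ), g t * t ^ α < c) :
    ∫⁻ x in ball (0 : E) ρ, ∫⁻ y in ball 0 ρ, ENNReal.ofReal (g ‖y - x‖) ∂μ ∂μ <
      ENNReal.ofReal c * (∫⁻ w in ball (0 : E) (2 * ρ), ENNReal.ofReal (‖w‖ ^ (-α)) ∂μ) *
        μ (ball 0 ρ) := by
  refine setLIntegral_lt_mul_measure measurableSet_ball (measure_ball_pos μ _ hρ).ne'
    measure_ball_lt_top.ne ?_ fun x hx ↦ ?_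
  · rw [lintegral_ball_norm_rpow_neg μ hα (by positivity)]
    finiteness
  refine (setLIntegral_ball_le_of_mul_rpow_lt μ hg hx).trans_lt ?_
  refine ENNReal.mul_lt_mul_right (ENNReal.ofReal_pos.2 hc).ne' ENNReal.ofReal_ne_top ?_
  rw [mem_ball_zero_iff] at hx
  exact lintegral_ball_norm_rpow_neg_strictMonoOn μ hα (mem_Ioi.2 (by positivity))
    (mem_Ioi.2 (by positivity)) (by linarith)

end Polar

theorem ball_selfenergy_estimate_general {N : ℕ} (hN : 0 < N)
    (α : ℝ) (hαN : α < N)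
    (ρ ε : ℝ) (hρ : 0 < ρ) (hε : 0 < ε)
    (j : ℕ) (hj : 0 < j)
    (g : ℝ → ℝ)
    (hsmall : ∀ t ∈ Set.Ioo (0 : ℝ) (2 * ρ), g t * t ^ α < 1 / (j : ℝ))
    (heq : g (3 * ρ / ε) * (3 * ρ / ε) ^ α = 1 / (j : ℝ)) :
    (∫⁻ x in Metric.ball (0 : EuclideanSpace ℝ (Fin N)) ρ,
      ∫⁻ y in Metric.ball (0 : EuclideanSpace ℝ (Fin N)) ρ,
        ENNReal.ofReal (g ‖y - x‖)) <
      ENNReal.ofReal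
        ((3 : ℝ) ^ α * (2 : ℝ) ^ ((N : ℝ) - α) * N *
            (volume (Metric.ball (0 : EuclideanSpace ℝ (Fin N)) 1)).toReal ^ 2 *
            ρ ^ (2 * N) / (ε ^ α * ((N : ℝ) - α)) * g (3 * ρ / ε)) := by
  have : Nonempty (Fin N) := ⟨⟨0, hN⟩⟩
  have hdim : Module.finrank ℝ (EuclideanSpace ℝ (Fin N)) = N := finrank_euclideanSpace_fin
  have hα : α < Module.finrank ℝ (EuclideanSpace ℝ (Fin N)) := by rwa [hdim]
  set c : ℝ := 1 / j
  set ω := volume (ball (0 : EuclideanSpace ℝ (Fin N)) 1)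
  have hreal : (3 : ℝ) ^ α * 2 ^ ((N : ℝ) - α) * N * ω.toReal ^ 2 * ρ ^ (2 * N) /
      (ε ^ α * ((N : ℝ) - α)) * g (3 * ρ / ε) =
      c * (N * ω.toReal * ((2 * ρ) ^ ((N : ℝ) - α) / ((N : ℝ) - α))) * (ρ ^ N * ω.toReal) := by
    have hρN : ρ ^ α * ρ ^ ((N : ℝ) - α) = ρ ^ N := by
      rw [← Real.rpow_add hρ, add_sub_cancel, Real.rpow_natCast]
    rw [← heq, Real.div_rpow (by positivity) hε.le, Real.mul_rpow (by norm_num) hρ.le,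
      Real.mul_rpow (by norm_num) hρ.le, pow_mul', sq, ← hρN]
    field_simp
  have hA : 0 ≤ (2 * ρ) ^ ((N : ℝ) - α) / ((N : ℝ) - α) := by
    have := sub_pos.2 hαN
    positivity
  refine (setLIntegral_ball_setLIntegral_ball_lt volume hα hρ (by positivity) hsmall).trans_eq ?_
  rw [lintegral_ball_norm_rpow_neg volume hα (by positivity), Measure.addHaar_ball _ _ hρ.le, hdim,
    hreal]
  simp (disch := positivity) only [ENNReal.ofReal_mul, ENNReal.ofReal_natCast, ENNReal.ofReal_pow,
    ENNReal.ofReal_toReal (a := ω) measure_ball_lt_top.ne]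
  rfl

/-- Quantitative estimate of the self-interaction of a small ball:
if `g` is decreasing on `(0, 3ρ/ε)`, `g(t)t^α < 1/j` on `(0,2ρ)` and
`g(3ρ/ε)(3ρ/ε)^α = 1/j`, then
`∫∫_{B_ρ×B_ρ} g(|y-x|) < (3^α 2^{N-α} N ω_N² ρ^{2N} / (ε^α (N-α))) g(3ρ/ε)`. -/
theorem ball_selfenergy_estimate {N : ℕ} (hN : 0 < N)
    (α : ℝ) (hα : 0 < α) (hαN : α < N)
    (ρ ε : ℝ) (hρ : 0 < ρ) (hε : 0 < ε)
    (j : ℕ) (hj : 0 < j)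
    (g : ℝ → ℝ) (hpos : ∀ t, 0 ≤ g t)
    (hdec : AntitoneOn g (Set.Ioo (0 : ℝ) (3 * ρ / ε)))
    (hsmall : ∀ t ∈ Set.Ioo (0 : ℝ) (2 * ρ), g t * t ^ α < 1 / (j : ℝ))
    (heq : g (3 * ρ / ε) * (3 * ρ / ε) ^ α = 1 / (j : ℝ)) :
    (∫⁻ x in Metric.ball (0 : EuclideanSpace ℝ (Fin N)) ρ,
      ∫⁻ y in Metric.ball (0 : EuclideanSpace ℝ (Fin N)) ρ,
        ENNReal.ofReal (g ‖y - x‖)) <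
      ENNReal.ofReal
        ((3 : ℝ) ^ α * (2 : ℝ) ^ ((N : ℝ) - α) * N *
            (volume (Metric.ball (0 : EuclideanSpace ℝ (Fin N)) 1)).toReal ^ 2 *
            ρ ^ (2 * N) / (ε ^ α * ((N : ℝ) - α)) * g (3 * ρ / ε)) :=
  ball_selfenergy_estimate_general hN α hαN ρ ε hρ hε j hj g hsmall heq
end

section
/- Let h̄ : ℝ^N → [0,∞) be locally integrable and suppose every probability measure μ can be approximated weakly* by smooth compactly supported probability densities μ_j with E_h̄(μ_j, μ_j) → E_h̄(μ, μ), where h̄ is lower semicontinuous. Then h̄ is strongly positive definite (i.e. E_h̄(μ,μ) + E_h̄(ν,ν) ≥ 2E_h̄(μ,ν) for all probability measures μ, ν) if and only if it is positive definite (the same inequality restricted to smooth compactly supported probability densities). -/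
open MeasureTheory Filter
open scoped ENNReal Topology

section SPDAuxSection

namespace SPDAux
open Metric NNReal
variable {N : ℕ}
local notation "Euc" => EuclideanSpace ℝ (Fin N)

lemma integrable_of_bdd {α : Measure Euc} [IsFiniteMeasure α] {g : Euc → ℝ}
    (hc : Continuous g) {M : ℝ} (hb : ∀ x, |g x| ≤ M) : Integrable g α :=
  (BoundedContinuousFunction.ofNormedAddCommGroup g hc M (by simpa using hb)).integrable α

noncomputable def cutoff (R : ℝ) (x : Euc) : ℝ := max 0 (min 1 (2 - ‖x‖ / R))

lemma cutoff_continuous (R : ℝ) : Continuous (cutoff (N := N) R) := by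
  unfold cutoff; fun_prop

lemma cutoff_nonneg (R : ℝ) (x : Euc) : 0 ≤ cutoff R x := le_max_left _ _

lemma cutoff_le_one (R : ℝ) (x : Euc) : cutoff R x ≤ 1 :=
  max_le (by norm_num) (min_le_left _ _)

lemma cutoff_abs_le_one (R : ℝ) (x : Euc) : |cutoff R x| ≤ 1 :=
  abs_le.2 ⟨by linarith [cutoff_nonneg (N := N) R x], cutoff_le_one R x⟩

lemma cutoff_eq_one {R : ℝ} (hR : 0 < R) {x : Euc} (hx : ‖x‖ ≤ R) : cutoff R x = 1 := by
  have h1 : (1:ℝ) ≤ 2 - ‖x‖ / R := by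
    have : ‖x‖ / R ≤ 1 := (div_le_one hR).2 hx
    linarith
  unfold cutoff
  rw [min_eq_left h1]; norm_num

lemma cutoff_eq_zero {R : ℝ} (hR : 0 < R) {x : Euc} (hx : 2 * R ≤ ‖x‖) : cutoff R x = 0 := by
  have h1 : (2:ℝ) - ‖x‖ / R ≤ 0 := by
    have : 2 ≤ ‖x‖ / R := (le_div_iff₀ hR).2 (by linarith)
    linarith
  unfold cutoff
  exact max_eq_left (min_le_of_right_le h1)

lemma cutoff_hcs {R : ℝ} (hR : 0 < R) : HasCompactSupport (cutoff (N := N) R) := by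
  apply HasCompactSupport.intro (isCompact_closedBall (0:Euc) (2*R))
  intro x hx
  apply cutoff_eq_zero hR
  have : ¬ ‖x‖ ≤ 2 * R := by simpa [mem_closedBall, dist_zero_right] using hx
  linarith [lt_of_not_ge this]

lemma cutoff_integrable {R : ℝ} (κ : Measure Euc) [IsProbabilityMeasure κ] :
    Integrable (cutoff (N := N) R) κ :=
  integrable_of_bdd (cutoff_continuous R) (cutoff_abs_le_one R)

lemma measure_ball_le_integral_cutoff {R : ℝ} (hR : 0 < R) (κ : Measure Euc)
    [IsProbabilityMeasure κ] :
    (κ (closedBall 0 R)).toReal ≤ ∫ x, cutoff R x ∂κ := by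
  rw [← measureReal_def, ← integral_indicator_one (measurableSet_closedBall (x := (0:Euc)) (ε := R))]
  apply integral_mono ((integrable_const (1:ℝ)).indicator measurableSet_closedBall)
    (cutoff_integrable κ)
  intro x
  by_cases hx : x ∈ closedBall (0:Euc) R
  · rw [Set.indicator_of_mem hx]
    exact le_of_eq (cutoff_eq_one hR (by simpa [dist_zero_right] using hx)).symm
  · rw [Set.indicator_of_notMem hx]
    exact cutoff_nonneg R x

lemma integral_cutoff_le_measure_ball {R : ℝ} (hR : 0 < R) (κ : Measure Euc)
    [IsProbabilityMeasure κ] :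
    ∫ x, cutoff R x ∂κ ≤ (κ (closedBall 0 (2*R))).toReal := by
  rw [← measureReal_def, ← integral_indicator_one (measurableSet_closedBall (x := (0:Euc)) (ε := 2*R))]
  apply integral_mono (cutoff_integrable κ)
    ((integrable_const (1:ℝ)).indicator measurableSet_closedBall)
  intro x
  by_cases hx : x ∈ closedBall (0:Euc) (2*R)
  · rw [Set.indicator_of_mem hx]; exact cutoff_le_one R x
  · rw [Set.indicator_of_notMem hx]
    refine le_of_eq (cutoff_eq_zero hR ?_)
    have : ¬ ‖x‖ ≤ 2 * R := by simpa [mem_closedBall, dist_zero_right] using hx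
    linarith [lt_of_not_ge this]

lemma exists_cutoff_big (κ : Measure Euc) [IsProbabilityMeasure κ] {ε : ℝ} (hε : 0 < ε) :
    ∃ R : ℝ, 0 < R ∧ 1 - ε ≤ ∫ x, cutoff R x ∂κ := by
  have hU : ⋃ n : ℕ, closedBall (0:Euc) n = Set.univ := by
    ext x
    simp only [Set.mem_iUnion, mem_closedBall, dist_zero_right, Set.mem_univ, iff_true]
    obtain ⟨n, hn⟩ := exists_nat_ge ‖x‖
    exact ⟨n, hn⟩
  have hmono : Monotone fun n : ℕ => closedBall (0:Euc) n := fun a b hab =>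
    closedBall_subset_closedBall (by exact_mod_cast hab)
  have ht : Tendsto (fun n : ℕ => κ (closedBall (0:Euc) n)) atTop (𝓝 1) := by
    have := tendsto_measure_iUnion_atTop (μ := κ) hmono
    rw [hU, measure_univ] at this
    exact this
  have ht' : Tendsto (fun n : ℕ => (κ (closedBall (0:Euc) n)).toReal) atTop (𝓝 1) := by
    have := (ENNReal.tendsto_toReal (by norm_num : (1:ℝ≥0∞) ≠ ⊤)).comp ht
    simpa [Function.comp_def] using this
  have hev : ∀ᶠ n : ℕ in atTop, 1 - ε < (κ (closedBall (0:Euc) n)).toReal :=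
    ht'.eventually (eventually_gt_nhds (by linarith))
  obtain ⟨n, hn, hn1⟩ := (hev.and (eventually_ge_atTop 1)).exists
  have hpos : (0:ℝ) < n := by exact_mod_cast lt_of_lt_of_le one_pos hn1
  exact ⟨n, hpos, hn.le.trans (measure_ball_le_integral_cutoff (by exact_mod_cast hpos) κ)⟩


/-- Weak convergence tested against compactly supported continuous functions. -/
def WConv (κs : ℕ → Measure Euc) (κ : Measure Euc) : Prop :=
  ∀ φ : Euc → ℝ, Continuous φ → HasCompactSupport φ →
    Tendsto (fun j => ∫ x, φ x ∂(κs j)) atTop (𝓝 (∫ x, φ x ∂κ))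

/-- Upgrade: convergence against all bounded continuous functions. -/
lemma WConv.bdd {κs : ℕ → Measure Euc} {κ : Measure Euc}
    [∀ j, IsProbabilityMeasure (κs j)] [IsProbabilityMeasure κ]
    (hw : WConv κs κ) {ψ : Euc → ℝ} (hc : Continuous ψ) {M : ℝ} (hb : ∀ x, |ψ x| ≤ M) :
    Tendsto (fun j => ∫ x, ψ x ∂(κs j)) atTop (𝓝 (∫ x, ψ x ∂κ)) := by
  have hM : 0 ≤ M := (abs_nonneg _).trans (hb (0 : Euc))
  rw [Metric.tendsto_atTop]
  intro ε hε
  -- choose δ with 2*M*δ + 2*M*δ + δ < ε roughly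
  obtain ⟨δ, hδ, hδε⟩ : ∃ δ : ℝ, 0 < δ ∧ (4*M + 1) * δ < ε :=
    ⟨ε / (4*M + 2), by positivity, by
      have h42 : (0:ℝ) < 4*M+2 := by positivity
      calc (4*M+1) * (ε / (4*M+2)) < (4*M+2) * (ε / (4*M+2)) :=
            mul_lt_mul_of_pos_right (by linarith) (by positivity)
        _ = ε := by field_simp⟩
  obtain ⟨R, hR, hRb⟩ := exists_cutoff_big κ hδ
  set χ := cutoff (N := N) R with hχ
  have hχc : Continuous χ := cutoff_continuous R
  have hχnn := cutoff_nonneg (N := N) R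
  have hχ1 := cutoff_le_one (N := N) R
  -- ψ * χ has compact support
  have hcs : HasCompactSupport (fun x => ψ x * χ x) := (cutoff_hcs hR).mul_left
  have h1 := hw _ (hc.mul hχc) hcs
  have h2 := hw _ hχc (cutoff_hcs hR)
  -- eventually close
  have hev1 : ∀ᶠ j in atTop,
      |∫ x, ψ x * χ x ∂(κs j) - ∫ x, ψ x * χ x ∂κ| < δ := by
    have := h1.eventually (eventually_abs_sub_lt (∫ x, ψ x * χ x ∂κ) hδ)
    simpa using this
  have hev2 : ∀ᶠ j in atTop, 1 - 2*δ ≤ ∫ x, χ x ∂(κs j) := by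
    have := h2.eventually (eventually_abs_sub_lt (∫ x, χ x ∂κ) hδ)
    filter_upwards [this] with j hj
    have := abs_lt.1 hj
    linarith [this.1]
  -- main estimate
  obtain ⟨J, hJ⟩ := (hev1.and hev2).exists_forall_of_atTop
  refine ⟨J, fun j hj => ?_⟩
  obtain ⟨e1, e2⟩ := hJ j hj
  rw [Real.dist_eq]
  -- |∫ψ dκj - ∫ψ dκ| ≤ |∫ψχ dκj - ∫ψχ dκ| + ∫|ψ|(1-χ) dκj + ∫|ψ|(1-χ) dκ
  have key : ∀ (m : Measure Euc) [IsProbabilityMeasure m],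
      |∫ x, ψ x ∂m - ∫ x, ψ x * χ x ∂m| ≤ M * (1 - ∫ x, χ x ∂m) := by
    intro m hm
    have hint1 : Integrable ψ m := integrable_of_bdd hc hb
    have hintχ : Integrable χ m := cutoff_integrable m
    have hint2 : Integrable (fun x => ψ x * χ x) m :=
      integrable_of_bdd (hc.mul hχc) (M := M) (fun x => by
        rw [abs_mul]
        calc |ψ x| * |χ x| ≤ M * 1 := by
              apply mul_le_mul (hb x) (by simpa [hχ, abs_of_nonneg (hχnn x)] using hχ1 x)
                (abs_nonneg _) hM
          _ = M := by ring)
    have hint3 : Integrable (fun x => M * (1 - χ x)) m :=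
      (((integrable_const (1:ℝ)).sub hintχ).const_mul M)
    rw [← integral_sub hint1 hint2]
    have habs : |∫ x, ψ x - ψ x * χ x ∂m| ≤ ∫ x, |ψ x - ψ x * χ x| ∂m := by
      simpa [Real.norm_eq_abs] using
        norm_integral_le_integral_norm (μ := m) (f := fun x => ψ x - ψ x * χ x)
    refine habs.trans ?_
    have hstep : ∫ x, |ψ x - ψ x * χ x| ∂m ≤ ∫ x, M * (1 - χ x) ∂m := by
      apply integral_mono (hint1.sub hint2).abs hint3
      intro x
      show |ψ x - ψ x * χ x| ≤ M * (1 - χ x)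
      have heq : |ψ x - ψ x * χ x| = |ψ x| * (1 - χ x) := by
        rw [show ψ x - ψ x * χ x = ψ x * (1 - χ x) by ring, abs_mul,
          abs_of_nonneg (show (0:ℝ) ≤ 1 - χ x by linarith [hχ1 x])]
      rw [heq]
      exact mul_le_mul_of_nonneg_right (hb x) (by linarith [hχ1 x])
    refine hstep.trans (le_of_eq ?_)
    rw [integral_const_mul, integral_sub (integrable_const 1) hintχ]
    simp
  have k1 := key (κs j)
  have k2 := key κ
  have hb1 : 1 - ∫ x, χ x ∂(κs j) ≤ 2*δ := by linarith
  have hb2 : 1 - ∫ x, χ x ∂κ ≤ δ := by linarith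
  have hχm : ∫ x, χ x ∂κ ≤ 1 := by
    calc ∫ x, χ x ∂κ ≤ ∫ x, (1:ℝ) ∂κ :=
          integral_mono (cutoff_integrable κ) (integrable_const 1) hχ1
      _ = 1 := by simp
  have hχmj : ∫ x, χ x ∂(κs j) ≤ 1 := by
    calc ∫ x, χ x ∂(κs j) ≤ ∫ x, (1:ℝ) ∂(κs j) :=
          integral_mono (cutoff_integrable (κs j)) (integrable_const 1) hχ1
      _ = 1 := by simp
  have hM1 : M * (1 - ∫ x, χ x ∂(κs j)) ≤ M * (2*δ) :=
    mul_le_mul_of_nonneg_left hb1 hM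
  have hM2 : M * (1 - ∫ x, χ x ∂κ) ≤ M * δ := mul_le_mul_of_nonneg_left hb2 hM
  have tri1 : |∫ x, ψ x ∂(κs j) - ∫ x, ψ x ∂κ|
      ≤ |∫ x, ψ x ∂(κs j) - ∫ x, ψ x * χ x ∂(κs j)|
        + |∫ x, ψ x * χ x ∂(κs j) - ∫ x, ψ x ∂κ| := abs_sub_le _ _ _
  have tri2 : |∫ x, ψ x * χ x ∂(κs j) - ∫ x, ψ x ∂κ|
      ≤ |∫ x, ψ x * χ x ∂(κs j) - ∫ x, ψ x * χ x ∂κ|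
        + |∫ x, ψ x * χ x ∂κ - ∫ x, ψ x ∂κ| := abs_sub_le _ _ _
  have k2' : |∫ x, ψ x * χ x ∂κ - ∫ x, ψ x ∂κ| ≤ M * (1 - ∫ x, χ x ∂κ) := by
    rw [abs_sub_comm]; exact k2
  have hfin : M * (2*δ) + δ + M * δ ≤ (4*M+1) * δ := by nlinarith [mul_nonneg hM hδ.le]
  linarith


/-- Tightness of a weakly converging sequence of probability measures. -/
lemma WConv.tight {κs : ℕ → Measure Euc} {κ : Measure Euc}
    [∀ j, IsProbabilityMeasure (κs j)] [IsProbabilityMeasure κ]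
    (hw : WConv κs κ) {ε : ℝ} (hε : 0 < ε) :
    ∃ R : ℝ, 0 < R ∧ ∀ᶠ j in atTop, ((κs j) (closedBall (0:Euc) R)ᶜ).toReal ≤ ε := by
  obtain ⟨R, hR, hRb⟩ := exists_cutoff_big κ (half_pos hε)
  have hconv := hw _ (cutoff_continuous R) (cutoff_hcs hR)
  have hev : ∀ᶠ j in atTop, 1 - ε < ∫ x, cutoff R x ∂(κs j) := by
    apply hconv.eventually (eventually_gt_nhds ?_)
    linarith
  refine ⟨2*R, by linarith, ?_⟩
  filter_upwards [hev] with j hj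
  have h1 : 1 - ε < ((κs j) (closedBall (0:Euc) (2*R))).toReal :=
    lt_of_lt_of_le hj (integral_cutoff_le_measure_ball hR (κs j))
  have h2 : ((κs j) (closedBall (0:Euc) (2*R))ᶜ).toReal
      = 1 - ((κs j) (closedBall (0:Euc) (2*R))).toReal := by
    rw [prob_compl_eq_one_sub measurableSet_closedBall]
    rw [ENNReal.toReal_sub_of_le prob_le_one ENNReal.one_ne_top]
    simp
  rw [h2]
  linarith

/-- Bounded nonnegative Lipschitz function. -/
def GoodFn (K : ℝ≥0) (M : ℝ) (g : Euc → ℝ) : Prop :=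
  LipschitzWith K g ∧ ∀ x, g x ∈ Set.Icc (0:ℝ) M

lemma GoodFn.continuous {K : ℝ≥0} {M : ℝ} {g : Euc → ℝ} (hg : GoodFn K M g) :
    Continuous g := hg.1.continuous

lemma GoodFn.M_nonneg {K : ℝ≥0} {M : ℝ} {g : Euc → ℝ} (hg : GoodFn K M g) : 0 ≤ M :=
  ((hg.2 0).1).trans ((hg.2 0).2)

lemma GoodFn.abs_le {K : ℝ≥0} {M : ℝ} {g : Euc → ℝ} (hg : GoodFn K M g) (x : Euc) :
    |g x| ≤ M := _root_.abs_le.2 ⟨by linarith [(hg.2 x).1, hg.M_nonneg], (hg.2 x).2⟩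

lemma GoodFn.integrable {K : ℝ≥0} {M : ℝ} {g : Euc → ℝ} (hg : GoodFn K M g)
    (κ : Measure Euc) [IsProbabilityMeasure κ] : Integrable g κ :=
  integrable_of_bdd hg.continuous (M := M) (fun x => GoodFn.abs_le hg x)

/-- The averaged function `x ↦ ∫ g(y - x) dβ(y)` is again good. -/
lemma GoodFn.avg {K : ℝ≥0} {M : ℝ} {g : Euc → ℝ} (hg : GoodFn K M g)
    (β : Measure Euc) [IsProbabilityMeasure β] :
    GoodFn K M (fun x => ∫ y, g (y - x) ∂β) := by
  have hint : ∀ x : Euc, Integrable (fun y => g (y - x)) β := fun x =>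
    integrable_of_bdd (hg.continuous.comp (by fun_prop)) (fun y => hg.abs_le _)
  constructor
  · apply LipschitzWith.of_dist_le_mul
    intro x x'
    rw [Real.dist_eq, ← integral_sub (hint x) (hint x')]
    have hb : ∀ y : Euc, |g (y - x) - g (y - x')| ≤ (K : ℝ) * dist x x' := by
      intro y
      have := hg.1.dist_le_mul (y - x) (y - x')
      rwa [Real.dist_eq, dist_sub_left] at this
    calc |∫ y, g (y - x) - g (y - x') ∂β| ≤ ∫ y, |g (y - x) - g (y - x')| ∂β := by
          simpa [Real.norm_eq_abs] using
            norm_integral_le_integral_norm (μ := β) (f := fun y => g (y - x) - g (y - x'))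
      _ ≤ ∫ _y, (K : ℝ) * dist x x' ∂β :=
          integral_mono ((hint x).sub (hint x')).abs (integrable_const _) hb
      _ = (K : ℝ) * dist x x' := by simp
  · intro x
    constructor
    · exact integral_nonneg fun y => (hg.2 _).1
    · calc ∫ y, g (y - x) ∂β ≤ ∫ _y, M ∂β :=
            integral_mono (hint x) (integrable_const _) fun y => (hg.2 _).2
        _ = M := by simp

/-- Core: convergence of the double integral against two weakly converging sequences. -/
lemma conv_pair {μs νs : ℕ → Measure Euc} {μ ν : Measure Euc}
    [∀ j, IsProbabilityMeasure (μs j)] [∀ j, IsProbabilityMeasure (νs j)]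
    [IsProbabilityMeasure μ] [IsProbabilityMeasure ν]
    (hμ : WConv μs μ) (hν : WConv νs ν)
    {g : Euc → ℝ} {K : ℝ≥0} {M : ℝ} (hg : GoodFn K M g) :
    Tendsto (fun j => ∫ x, ∫ y, g (y - x) ∂(νs j) ∂(μs j)) atTop
      (𝓝 (∫ x, ∫ y, g (y - x) ∂ν ∂μ)) := by
  set F : Euc → ℝ := fun x => ∫ y, g (y - x) ∂ν with hF
  set Fj : ℕ → Euc → ℝ := fun j x => ∫ y, g (y - x) ∂(νs j) with hFj
  have hFg : GoodFn K M F := hg.avg ν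
  have hFjg : ∀ j, GoodFn K M (Fj j) := fun j => hg.avg (νs j)
  have hpt : ∀ x : Euc, Tendsto (fun j => Fj j x) atTop (𝓝 (F x)) := fun x =>
    hν.bdd (hg.continuous.comp (by fun_prop)) (fun y => hg.abs_le (y - x))
  have hterm2 : Tendsto (fun j => ∫ x, F x ∂(μs j)) atTop (𝓝 (∫ x, F x ∂μ)) :=
    hμ.bdd hFg.continuous hFg.abs_le
  have hterm1 : Tendsto (fun j => ∫ x, (Fj j x - F x) ∂(μs j)) atTop (𝓝 0) := by
    rw [NormedAddCommGroup.tendsto_nhds_zero]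
    intro ε hε
    have hM := hg.M_nonneg
    set ε' : ℝ := ε / (2*M + 4) with hε'def
    have hε' : 0 < ε' := by positivity
    obtain ⟨R, hR, htight⟩ := hμ.tight hε'
    set B := closedBall (0:Euc) R with hB
    set L : ℝ := (K : ℝ) with hL
    have hLnn : 0 ≤ L := K.coe_nonneg
    set δ : ℝ := ε' / (L + 1) with hδdef
    have hδ : 0 < δ := by positivity
    -- finite subcover of B by δ-balls
    have hcover : B ⊆ ⋃ z : Euc, ball z δ := fun x _ =>
      Set.mem_iUnion.2 ⟨x, mem_ball_self hδ⟩
    obtain ⟨t, ht⟩ := (isCompact_closedBall (0:Euc) R).elim_finite_subcover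
      (fun z : Euc => ball z δ) (fun z => isOpen_ball) hcover
    -- eventually all net points are close
    have hevt : ∀ᶠ j in atTop, ∀ z ∈ t, |Fj j z - F z| < ε' := by
      rw [eventually_all_finset]
      intro z _
      exact (hpt z).eventually (eventually_abs_sub_lt _ hε')
    filter_upwards [hevt, htight] with j hjt hjtight
    -- pointwise bound
    have hptw : ∀ x : Euc, |Fj j x - F x| ≤ 3*ε' + Set.indicator Bᶜ (fun _ => 2*M) x := by
      intro x
      by_cases hx : x ∈ B
      · obtain ⟨z, hz, hxz⟩ := by simpa using ht hx
        have h1 : |Fj j x - Fj j z| ≤ L * δ := by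
          have h := (hFjg j).1.dist_le_mul x z
          rw [Real.dist_eq] at h
          exact h.trans (by nlinarith [mem_ball.1 hxz, dist_nonneg (x := x) (y := z)])
        have h2 : |F z - F x| ≤ L * δ := by
          have h := hFg.1.dist_le_mul z x
          rw [Real.dist_eq] at h
          refine h.trans ?_
          rw [dist_comm]
          nlinarith [mem_ball.1 hxz, dist_nonneg (x := x) (y := z)]
        have hLδ : L * δ ≤ ε' := by
          calc L * δ ≤ (L+1) * δ := by nlinarith
            _ = ε' := by rw [hδdef]; field_simp
        have tri : |Fj j x - F x| ≤ |Fj j x - Fj j z| + |Fj j z - F z| + |F z - F x| := by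
          have t1 := abs_sub_le (Fj j x) (Fj j z) (F x)
          have t2 := abs_sub_le (Fj j z) (F z) (F x)
          linarith
        have : Set.indicator Bᶜ (fun _ => 2*M) x = 0 :=
          Set.indicator_of_notMem (by simpa using hx) _
        rw [this]
        have := hjt z hz
        linarith
      · have : Set.indicator Bᶜ (fun _ => 2*M) x = 2*M :=
          Set.indicator_of_mem (by simpa using hx) _
        rw [this]
        have b1 := (hFjg j).abs_le x
        have b2 := hFg.abs_le x
        calc |Fj j x - F x| ≤ |Fj j x| + |F x| := abs_sub _ _
          _ ≤ M + M := add_le_add b1 b2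
          _ ≤ 3*ε' + 2*M := by linarith
    -- integrate the bound
    have hint1 : Integrable (fun x => Fj j x - F x) (μs j) :=
      ((hFjg j).integrable (μs j)).sub (hFg.integrable (μs j))
    have hint2 : Integrable (fun x => 3*ε' + Set.indicator Bᶜ (fun _ => 2*M) x) (μs j) :=
      (integrable_const _).add ((integrable_const _).indicator measurableSet_closedBall.compl)
    have habs : ‖∫ x, (Fj j x - F x) ∂(μs j)‖ ≤ ∫ x, |Fj j x - F x| ∂(μs j) := by
      simpa [Real.norm_eq_abs] using
        norm_integral_le_integral_norm (μ := μs j) (f := fun x => Fj j x - F x)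
    calc ‖∫ x, (Fj j x - F x) ∂(μs j)‖
        ≤ ∫ x, |Fj j x - F x| ∂(μs j) := habs
      _ ≤ ∫ x, (3*ε' + Set.indicator Bᶜ (fun _ => 2*M) x) ∂(μs j) :=
          integral_mono hint1.abs hint2 hptw
      _ < ε := by
        rw [integral_add (integrable_const _)
          ((integrable_const _).indicator measurableSet_closedBall.compl)]
        rw [integral_indicator_const _ measurableSet_closedBall.compl]
        simp only [integral_const, measureReal_def, measure_univ, ENNReal.toReal_one, one_smul, smul_eq_mul]
        have hmm : ((μs j) Bᶜ).toReal * (2*M) ≤ ε' * (2*M) :=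
          mul_le_mul_of_nonneg_right hjtight (by linarith)
        have hfin : 3*ε' + ε' * (2*M) < ε := by
          have h24 : (0:ℝ) < 2*M + 4 := by linarith
          calc 3*ε' + ε' * (2*M) = (2*M+3) * ε' := by ring
            _ < (2*M+4) * ε' := by nlinarith
            _ = ε := by rw [hε'def]; field_simp
        linarith
  have := hterm1.add hterm2
  rw [zero_add] at this
  apply this.congr
  intro j
  have hadd := integral_add (((hFjg j).integrable (μs j)).sub (hFg.integrable (μs j)))
    (hFg.integrable (μs j))
  simp only [Pi.sub_apply, sub_add_cancel] at hadd
  exact hadd.symm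


/-- Moreau–Yosida style approximation of a lower semicontinuous `ℝ≥0∞`-valued function
by an increasing sequence of bounded Lipschitz functions. -/
lemma exists_minorants (h : Euc → ℝ≥0∞) (hlsc : LowerSemicontinuous h) :
    ∃ g : ℕ → Euc → ℝ,
      (∀ n : ℕ, GoodFn (n : ℝ≥0) (n : ℝ) (g n)) ∧ (∀ x, Monotone fun n => g n x) ∧
      (∀ n x, ENNReal.ofReal (g n x) ≤ h x) ∧ (∀ x, ⨆ n, ENNReal.ofReal (g n x) = h x) := by
  classical
  set m : ℕ → Euc → ℝ := fun n y => (min (h y) n).toReal with hm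
  have hm_nonneg : ∀ n y, 0 ≤ m n y := fun n y => ENNReal.toReal_nonneg
  have hm_le : ∀ n y, m n y ≤ n := by
    intro n y
    rw [hm]
    calc (min (h y) n).toReal ≤ ((n : ℝ≥0∞)).toReal :=
          ENNReal.toReal_mono (by simp) (min_le_right _ _)
      _ = n := by simp
  have hm_ne_top : ∀ (n : ℕ) (y : Euc), min (h y) (n : ℝ≥0∞) ≠ ⊤ :=
    fun n y => ne_top_of_le_ne_top (by simp) (min_le_right _ _)
  set g : ℕ → Euc → ℝ := fun n x => ⨅ y : Euc, (m n y + n * dist x y) with hg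
  have hbdd : ∀ n x, BddBelow (Set.range fun y : Euc => m n y + n * dist x y) := by
    intro n x
    refine ⟨0, fun r hr => ?_⟩
    obtain ⟨y, rfl⟩ := hr
    have := hm_nonneg n y
    positivity
  have hg_le : ∀ n x, g n x ≤ m n x := by
    intro n x
    have := ciInf_le (hbdd n x) x
    simpa using this
  have hg_nonneg : ∀ n x, 0 ≤ g n x := by
    intro n x
    apply le_ciInf
    intro y
    have := hm_nonneg n y
    positivity
  have hg_lip : ∀ n (x x' : Euc), g n x ≤ g n x' + n * dist x x' := by
    intro n x x'
    rw [hg]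
    have : ∀ y : Euc, g n x - n * dist x x' ≤ m n y + n * dist x' y := by
      intro y
      have h1 : g n x ≤ m n y + n * dist x y := ciInf_le (hbdd n x) y
      have h2 : dist x y ≤ dist x x' + dist x' y := dist_triangle x x' y
      nlinarith [Nat.cast_nonneg (α := ℝ) n]
    have := le_ciInf this
    simp only [hg] at this ⊢
    linarith
  refine ⟨g, fun n => ⟨?_, fun x => ⟨hg_nonneg n x, (hg_le n x).trans (hm_le n x)⟩⟩, ?_, ?_, ?_⟩
  · -- Lipschitz
    apply LipschitzWith.of_dist_le_mul
    intro x x'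
    rw [Real.dist_eq]
    rw [abs_le]
    constructor
    · have := hg_lip n x' x
      rw [dist_comm x' x] at this
      simp only [NNReal.coe_natCast]
      linarith
    · have := hg_lip n x x'
      simp only [NNReal.coe_natCast]
      linarith
  · -- monotone in n
    intro x a b hab
    apply ciInf_mono (hbdd a x)
    intro y
    have h1 : m a y ≤ m b y := by
      apply ENNReal.toReal_mono (hm_ne_top b y)
      exact min_le_min le_rfl (by exact_mod_cast Nat.cast_le.2 hab)
    have h2 : (a:ℝ) * dist x y ≤ (b:ℝ) * dist x y :=
      mul_le_mul_of_nonneg_right (by exact_mod_cast hab) dist_nonneg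
    linarith
  · -- minorant
    intro n x
    calc ENNReal.ofReal (g n x) ≤ ENNReal.ofReal (m n x) :=
          ENNReal.ofReal_le_ofReal (hg_le n x)
      _ = min (h x) n := by rw [hm]; exact ENNReal.ofReal_toReal (hm_ne_top n x)
      _ ≤ h x := min_le_left _ _
  · -- supremum equals h
    intro x
    apply le_antisymm
    · apply iSup_le
      intro n
      calc ENNReal.ofReal (g n x) ≤ ENNReal.ofReal (m n x) :=
            ENNReal.ofReal_le_ofReal (hg_le n x)
        _ = min (h x) n := by rw [hm]; exact ENNReal.ofReal_toReal (hm_ne_top n x)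
        _ ≤ h x := min_le_left _ _
    · apply ENNReal.le_of_forall_nnreal_lt
      intro r hr
      have hev : ∀ᶠ y in 𝓝 x, (r : ℝ≥0∞) < h y := hlsc x _ hr
      obtain ⟨δ, hδ, hball⟩ := Metric.eventually_nhds_iff.1 hev
      obtain ⟨n₁, hn₁⟩ := exists_nat_ge (r : ℝ)
      obtain ⟨n₂, hn₂⟩ := exists_nat_ge ((r : ℝ) / δ)
      set n := max n₁ n₂ with hn
      have hrn : (r : ℝ) ≤ n := hn₁.trans (by exact_mod_cast le_max_left n₁ n₂)
      have hrδ : (r : ℝ) ≤ n * δ := by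
        have : (r : ℝ) / δ ≤ n := hn₂.trans (by exact_mod_cast le_max_right n₁ n₂)
        rw [div_le_iff₀ hδ] at this
        linarith
      have hterm : ∀ y : Euc, (r : ℝ) ≤ m n y + n * dist x y := by
        intro y
        by_cases hy : dist y x < δ
        · have hhy : (r : ℝ≥0∞) < h y := hball hy
          have hrn' : (r : ℝ≥0∞) ≤ (n : ℝ≥0∞) := by exact_mod_cast hrn
          have hmin : (r : ℝ≥0∞) ≤ min (h y) n := le_min hhy.le hrn'
          have h2 : (r : ℝ) ≤ m n y := by
            have := ENNReal.toReal_mono (hm_ne_top n y) hmin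
            simpa using this
          have hd : (0:ℝ) ≤ (n : ℝ) * dist x y := by positivity
          linarith
        · push_neg at hy
          have : (r : ℝ) ≤ n * dist x y := by
            rw [dist_comm x y]
            calc (r : ℝ) ≤ n * δ := hrδ
              _ ≤ n * dist y x := by
                  apply mul_le_mul_of_nonneg_left hy (by positivity)
          have := hm_nonneg n y
          linarith
      have : (r : ℝ) ≤ g n x := le_ciInf hterm
      calc (r : ℝ≥0∞) = ENNReal.ofReal (r : ℝ) := by simp
        _ ≤ ENNReal.ofReal (g n x) := ENNReal.ofReal_le_ofReal this
        _ ≤ ⨆ k, ENNReal.ofReal (g k x) := le_iSup (fun k => ENNReal.ofReal (g k x)) n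

/-- Representation of the cross energy as a supremum over the minorants. -/
lemma energy_repr (h : Euc → ℝ≥0∞) {g : ℕ → Euc → ℝ}
    (hgood : ∀ n : ℕ, GoodFn (n : ℝ≥0) (n : ℝ) (g n)) (hmono : ∀ x, Monotone fun n => g n x)
    (hsup : ∀ x, ⨆ n, ENNReal.ofReal (g n x) = h x)
    (α β : Measure Euc) [IsProbabilityMeasure α] [IsProbabilityMeasure β] :
    ∫⁻ x, ∫⁻ y, h (y - x) ∂β ∂α
      = ⨆ n, ENNReal.ofReal (∫ x, ∫ y, g n (y - x) ∂β ∂α) := by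
  have hint : ∀ n (x : Euc), Integrable (fun y => g n (y - x)) β := fun n x =>
    integrable_of_bdd ((hgood n).continuous.comp (by fun_prop)) (M := n)
      (fun y => (hgood n).abs_le _)
  have hinner : ∀ x : Euc, ∫⁻ y, h (y - x) ∂β
      = ⨆ n, ENNReal.ofReal (∫ y, g n (y - x) ∂β) := by
    intro x
    have h1 : ∀ y : Euc, h (y - x) = ⨆ n, ENNReal.ofReal (g n (y - x)) :=
      fun y => (hsup (y - x)).symm
    rw [lintegral_congr h1]
    rw [lintegral_iSup]
    · congr 1
      ext n
      rw [← ofReal_integral_eq_lintegral_ofReal (hint n x)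
        (Filter.Eventually.of_forall fun y => ((hgood n).2 _).1)]
    · intro n
      exact ENNReal.measurable_ofReal.comp
        (((hgood n).continuous.comp (by fun_prop)).measurable)
    · intro a b hab y
      exact ENNReal.ofReal_le_ofReal (hmono _ hab)
  rw [lintegral_congr hinner]
  have hF : ∀ n : ℕ, GoodFn (n : ℝ≥0) (n : ℝ) (fun x => ∫ y, g n (y - x) ∂β) := fun n => (hgood n).avg β
  rw [lintegral_iSup]
  · congr 1
    ext n
    rw [← ofReal_integral_eq_lintegral_ofReal ((hF n).integrable α)
      (Filter.Eventually.of_forall fun x => ((hF n).2 x).1)]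
  · intro n
    exact ENNReal.measurable_ofReal.comp ((hF n).continuous.measurable)
  · intro a b hab x
    apply ENNReal.ofReal_le_ofReal
    exact integral_mono (hint a x) (hint b x) (fun y => hmono _ hab)


lemma integral_withDensity_smooth {f : Euc → ℝ} (hf : Continuous f) (hnn : ∀ x, 0 ≤ f x)
    (φ : Euc → ℝ) :
    ∫ x, φ x ∂(volume.withDensity fun x => ENNReal.ofReal (f x)) = ∫ x, φ x * f x := by
  have hmeas : Measurable fun x => Real.toNNReal (f x) := hf.measurable.real_toNNReal
  rw [show (fun x => ENNReal.ofReal (f x))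
      = fun x => ((Real.toNNReal (f x) : ℝ≥0) : ℝ≥0∞) from rfl]
  rw [integral_withDensity_eq_integral_smul hmeas φ]
  congr 1
  ext x
  simp [NNReal.smul_def, Real.coe_toNNReal _ (hnn x), mul_comm]

end SPDAux

end SPDAuxSection

noncomputable def crossEnergy {N : ℕ} (h : EuclideanSpace ℝ (Fin N) → ℝ≥0∞)
    (μ ν : Measure (EuclideanSpace ℝ (Fin N))) : ℝ≥0∞ :=
  ∫⁻ x, ∫⁻ y, h (y - x) ∂ν ∂μ

/-- A smooth compactly supported probability density, viewed as a measure. -/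
def IsSmoothProbDensity {N : ℕ} (f : EuclideanSpace ℝ (Fin N) → ℝ) : Prop :=
  ContDiff ℝ (⊤ : ℕ∞) f ∧ HasCompactSupport f ∧ (∀ x, 0 ≤ f x) ∧
    IsProbabilityMeasure (volume.withDensity fun x => ENNReal.ofReal (f x))

/-- If `h̄` is l.s.c., locally integrable, and every probability measure can be
approximated weakly* by smooth compactly supported probability densities whose
self-energies converge, then `h̄` is strongly positive definite (the inequality
`E(μ,μ)+E(ν,ν) ≥ 2E(μ,ν)` for all probability measures) if and only if it is
positive definite (the same inequality for smooth compactly supported probability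
densities). -/
theorem stronglyPositiveDefinite_iff_positiveDefinite {N : ℕ}
    (h : EuclideanSpace ℝ (Fin N) → ℝ≥0∞)
    (hlsc : LowerSemicontinuous h)
    (hloc : ∀ K : Set (EuclideanSpace ℝ (Fin N)), IsCompact K → ∫⁻ x in K, h x ∂volume < ⊤)
    (happrox : ∀ μ : Measure (EuclideanSpace ℝ (Fin N)), IsProbabilityMeasure μ →
      ∃ f : ℕ → EuclideanSpace ℝ (Fin N) → ℝ,
        (∀ j, IsSmoothProbDensity (f j)) ∧
        (∀ φ : EuclideanSpace ℝ (Fin N) → ℝ, Continuous φ → HasCompactSupport φ →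
          Tendsto (fun j => ∫ x, φ x * f j x) atTop (𝓝 (∫ x, φ x ∂μ))) ∧
        Tendsto
          (fun j => crossEnergy h (volume.withDensity fun x => ENNReal.ofReal (f j x))
            (volume.withDensity fun x => ENNReal.ofReal (f j x)))
          atTop (𝓝 (crossEnergy h μ μ))) :
    (∀ μ ν : Measure (EuclideanSpace ℝ (Fin N)),
        IsProbabilityMeasure μ → IsProbabilityMeasure ν →
        2 * crossEnergy h μ ν ≤ crossEnergy h μ μ + crossEnergy h ν ν) ↔
    (∀ f₁ f₂ : EuclideanSpace ℝ (Fin N) → ℝ,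
        IsSmoothProbDensity f₁ → IsSmoothProbDensity f₂ →
        2 * crossEnergy h (volume.withDensity fun x => ENNReal.ofReal (f₁ x))
            (volume.withDensity fun x => ENNReal.ofReal (f₂ x)) ≤
          crossEnergy h (volume.withDensity fun x => ENNReal.ofReal (f₁ x))
              (volume.withDensity fun x => ENNReal.ofReal (f₁ x)) +
            crossEnergy h (volume.withDensity fun x => ENNReal.ofReal (f₂ x))
              (volume.withDensity fun x => ENNReal.ofReal (f₂ x))) := by
  constructor
  · intro H f₁ f₂ h1 h2
    exact H _ _ h1.2.2.2 h2.2.2.2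
  · intro hsmooth μ ν hμ hν
    obtain ⟨f, hf, hfw, hfE⟩ := happrox μ hμ
    obtain ⟨k, hk, hkw, hkE⟩ := happrox ν hν
    set μs : ℕ → Measure (EuclideanSpace ℝ (Fin N)) :=
      fun j => volume.withDensity fun x => ENNReal.ofReal (f j x) with hμsdef
    set νs : ℕ → Measure (EuclideanSpace ℝ (Fin N)) :=
      fun j => volume.withDensity fun x => ENNReal.ofReal (k j x) with hνsdef
    haveI hμsP : ∀ j, IsProbabilityMeasure (μs j) := fun j => (hf j).2.2.2
    haveI hνsP : ∀ j, IsProbabilityMeasure (νs j) := fun j => (hk j).2.2.2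
    have hμw : SPDAux.WConv μs μ := by
      intro φ hc hcs
      exact (hfw φ hc hcs).congr fun j =>
        (SPDAux.integral_withDensity_smooth (hf j).1.continuous (hf j).2.2.1 φ).symm
    have hνw : SPDAux.WConv νs ν := by
      intro φ hc hcs
      exact (hkw φ hc hcs).congr fun j =>
        (SPDAux.integral_withDensity_smooth (hk j).1.continuous (hk j).2.2.1 φ).symm
    obtain ⟨g, hgood, hmono, hle, hsup⟩ := SPDAux.exists_minorants h hlsc
    have reprμν : crossEnergy h μ ν
        = ⨆ n, ENNReal.ofReal (∫ x, ∫ y, g n (y - x) ∂ν ∂μ) :=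
      SPDAux.energy_repr h hgood hmono hsup μ ν
    rw [reprμν, ENNReal.mul_iSup]
    refine iSup_le fun n => ?_
    have hconv := SPDAux.conv_pair hμw hνw (hgood n)
    have h1 : Tendsto
        (fun j => (2:ℝ≥0∞) * ENNReal.ofReal (∫ x, ∫ y, g n (y - x) ∂(νs j) ∂(μs j)))
        atTop (𝓝 (2 * ENNReal.ofReal (∫ x, ∫ y, g n (y - x) ∂ν ∂μ))) :=
      ENNReal.Tendsto.const_mul ((ENNReal.continuous_ofReal.tendsto _).comp hconv)
        (Or.inr (by norm_num))
    have h2 : Tendsto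
        (fun j => crossEnergy h (μs j) (μs j) + crossEnergy h (νs j) (νs j))
        atTop (𝓝 (crossEnergy h μ μ + crossEnergy h ν ν)) := hfE.add hkE
    refine le_of_tendsto_of_tendsto' h1 h2 fun j => ?_
    have e1 : ENNReal.ofReal (∫ x, ∫ y, g n (y - x) ∂(νs j) ∂(μs j))
        ≤ crossEnergy h (μs j) (νs j) := by
      have hrepr : crossEnergy h (μs j) (νs j)
          = ⨆ m, ENNReal.ofReal (∫ x, ∫ y, g m (y - x) ∂(νs j) ∂(μs j)) :=
        SPDAux.energy_repr h hgood hmono hsup (μs j) (νs j)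
      rw [hrepr]
      exact le_iSup (fun m => ENNReal.ofReal (∫ x, ∫ y, g m (y - x) ∂(νs j) ∂(μs j))) n
    calc 2 * ENNReal.ofReal (∫ x, ∫ y, g n (y - x) ∂(νs j) ∂(μs j))
        ≤ 2 * crossEnergy h (μs j) (νs j) := mul_le_mul_right e1 2
      _ ≤ crossEnergy h (μs j) (μs j) + crossEnergy h (νs j) (νs j) :=
          hsmooth (f j) (k j) (hf j) (hk j)
end
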